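/- arXiv:1704.05585 — 2 statements merged into one kernel-verified Lean document; each statement's English description precedes it below -/
import Mathlib

section
/- Substitution preserves typing in the sized type system restricted to quantifier-free types: if Γ, x : ρ' ⊢ t : ρ and Γ ⊢ v : ρ'' with ρ'' ⊑ ρ' for a value v, then Γ ⊢ t[x := v] : ρ'' for some ρ'' ⊑ ρ (i.e., t[x:=v] is typable with a subtype of ρ). -/
/- Index terms over a signature `F` of index symbols with arities `ar`. -/
inductive ITerm (F : Type) (ar : F → ℕ) : Type where
  | var : ℕ → ITerm F ar
  | app : (f : F) → (Fin (ar f) → ITerm F ar) → ITerm F ar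

namespace ITerm

variable {F : Type} {ar : F → ℕ}

/-- Interpretation of an index term under an interpretation `I` of the symbols
and an assignment `α` of the index variables. -/
def eval (I : (f : F) → (Fin (ar f) → ℕ) → ℕ) (α : ℕ → ℕ) : ITerm F ar → ℕ
  | var i => α i
  | app f ts => I f (fun j => (ts j).eval I α)

/-- Simultaneous substitution of index terms for index variables. -/
def subst (σ : ℕ → ITerm F ar) : ITerm F ar → ITerm F ar
  | var i => σ i
  | app f ts => app f (fun j => (ts j).subst σ)

end ITerm


/-- Free index variables of an index term. -/
def ITerm.fv {F : Type} {ar : F → ℕ} : ITerm F ar → Set ℕ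
  | .var i => {i}
  | .app _ ts => ⋃ j, (ts j).fv

/-- The semantic order on index terms. -/
def ILe {F : Type} {ar : F → ℕ} (I : (f : F) → (Fin (ar f) → ℕ) → ℕ)
    (s t : ITerm F ar) : Prop :=
  ∀ α : ℕ → ℕ, s.eval I α ≤ t.eval I α
/-- Quantifier-free sized monotypes over base type names `B` and index
terms `Ix`. -/
inductive QTy (B Ix : Type) : Type where
  | base : B → Ix → QTy B Ix
  | arr : QTy B Ix → QTy B Ix → QTy B Ix

/-- Subtyping of quantifier-free sized monotypes, relative to an order `le`
on index terms: covariant on base-type indices, contravariant in function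
arguments and covariant in results. -/
inductive QSub {B Ix : Type} (le : Ix → Ix → Prop) : QTy B Ix → QTy B Ix → Prop where
  | base {b : B} {s t : Ix} : le s t → QSub le (.base b s) (.base b t)
  | arr {ρ₁ ρ₂ ρ₁' ρ₂' : QTy B Ix} :
      QSub le ρ₁' ρ₁ → QSub le ρ₂ ρ₂' → QSub le (.arr ρ₁ ρ₂) (.arr ρ₁' ρ₂')

/-- Applicative terms over symbols S (functions and constructors). -/
inductive Tm (S : Type) : Type where
  | sym : S → Tm S
  | var : ℕ → Tm S
  | app : Tm S → Tm S → Tm S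

/-- Capture-free substitution of a term for a variable. -/
def Tm.subst1 {S : Type} (x : ℕ) (v : Tm S) : Tm S → Tm S
  | .sym f => .sym f
  | .var y => if y = x then v else .var y
  | .app t u => .app (Tm.subst1 x v t) (Tm.subst1 x v u)

/-- The quantifier-free fragment of the sized type system, relative to an
order le on index terms and a relation inst assigning to each symbol its
instance sized types:
(Var) a variable gets its type from the context;
(Fun) a symbol gets any instance of its declared type;
(App) application, where the argument type may be weakened by subtyping. -/
inductive QHasTy {B Ix S : Type} (le : Ix → Ix → Prop)
    (inst : S → QTy B Ix → Prop) :
    (ℕ → Option (QTy B Ix)) → Tm S → QTy B Ix → Prop where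
  | var : ∀ {Γ x ρ}, Γ x = some ρ → QHasTy le inst Γ (Tm.var x) ρ
  | sym : ∀ {Γ f ρ}, inst f ρ → QHasTy le inst Γ (Tm.sym f) ρ
  | app : ∀ {Γ t u ρ₂ ρ₂' ρ}, QHasTy le inst Γ t (QTy.arr ρ₂ ρ) →
      QHasTy le inst Γ u ρ₂' → QSub le ρ₂' ρ₂ →
      QHasTy le inst Γ (Tm.app t u) ρ


theorem QSub.refl' {B Ix : Type} {le : Ix → Ix → Prop} (hrefl : ∀ s, le s s) :
    ∀ ρ : QTy B Ix, QSub le ρ ρ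
  | .base b s => .base (hrefl s)
  | .arr a b => .arr (QSub.refl' hrefl a) (QSub.refl' hrefl b)

theorem QSub.trans' {B Ix : Type} {le : Ix → Ix → Prop}
    (htrans : ∀ s t u, le s t → le t u → le s u) :
    ∀ {a b c : QTy B Ix}, QSub le a b → QSub le b c → QSub le a c
  | _, _, _, .base h1, .base h2 => .base (htrans _ _ _ h1 h2)
  | _, _, _, .arr h1 h2, .arr h3 h4 =>
      .arr (QSub.trans' htrans h3 h1) (QSub.trans' htrans h2 h4)

theorem subst_aux {B Ix S : Type} (le : Ix → Ix → Prop)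
    (hrefl : ∀ s, le s s) (htrans : ∀ s t u, le s t → le t u → le s u)
    (inst : S → QTy B Ix → Prop)
    {Γ' : ℕ → Option (QTy B Ix)} {t : Tm S} {ρ : QTy B Ix}
    (ht : QHasTy le inst Γ' t ρ) :
    ∀ (Γ : ℕ → Option (QTy B Ix)) (x : ℕ) (ρ' ρ'' : QTy B Ix) (v : Tm S),
    Γ' = (fun y => if y = x then some ρ' else Γ y) →
    QHasTy le inst Γ v ρ'' → QSub le ρ'' ρ' →
    ∃ ρ₀, QSub le ρ₀ ρ ∧ QHasTy le inst Γ (Tm.subst1 x v t) ρ₀ := by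
  induction ht with
  | var hΓ =>
    rename_i y ρy
    intro Γ x ρ' ρ'' v hEq hvt hsub
    subst hEq
    by_cases h : y = x
    · subst h
      simp only [if_pos, Option.some_inj] at hΓ
      subst hΓ
      exact ⟨ρ'', hsub, by simpa [Tm.subst1] using hvt⟩
    · simp only [if_neg h] at hΓ
      exact ⟨ρy, QSub.refl' hrefl _, by simpa [Tm.subst1, h] using .var hΓ⟩
  | sym hf =>
    intro Γ x ρ' ρ'' v hEq hvt hsub
    exact ⟨_, QSub.refl' hrefl _, .sym hf⟩
  | app htf htu hsu ihf ihu =>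
    intro Γ x ρ' ρ'' v hEq hvt hsub
    obtain ⟨ρf, hsf, hf⟩ := ihf Γ x ρ' ρ'' v hEq hvt hsub
    obtain ⟨ρu, hsu', hu⟩ := ihu Γ x ρ' ρ'' v hEq hvt hsub
    cases hsf with
    | arr h1 h2 =>
      exact ⟨_, h2, .app hf hu (QSub.trans' htrans hsu' (QSub.trans' htrans hsu h1))⟩

/-- substitution preserves typing in the quantifier-free sized
type system: if Γ, x:ρ' ⊢ t : ρ and Γ ⊢ v : ρ'' for a value v with
ρ'' ⊑ ρ', then t[x := v] is typable in Γ with some subtype of ρ.  The order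
on index terms is assumed to be a preorder. -/
theorem substitution_preserves_typing {B Ix S : Type}
    (le : Ix → Ix → Prop)
    (hrefl : ∀ s, le s s) (htrans : ∀ s t u, le s t → le t u → le s u)
    (inst : S → QTy B Ix → Prop)
    (IsVal : Tm S → Prop)
    (Γ : ℕ → Option (QTy B Ix)) (x : ℕ) (ρ' ρ'' ρ : QTy B Ix)
    (t v : Tm S) (hv : IsVal v)
    (ht : QHasTy le inst (fun y => if y = x then some ρ' else Γ y) t ρ)
    (hvt : QHasTy le inst Γ v ρ'')
    (hsub : QSub le ρ'' ρ') :
    ∃ ρ₀, QSub le ρ₀ ρ ∧ QHasTy le inst Γ (Tm.subst1 x v t) ρ₀ :=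
  subst_aux le hrefl htrans inst ht Γ x ρ' ρ'' v rfl hvt hsub
end

section
/- Canonicity is preserved under instantiation of positive positions: if ρ is a canonical monotype and σ is an index substitution whose domain is disjoint from the negative free variables of ρ and which maps no variable occurring negatively in ρ to a non-variable term, then ρ·σ is canonical. -/
/-- Sized types: indexed base types and arrow types whose argument is a
polytype, i.e. a monotype prefixed by a quantifier over a list of index
variables (the empty list denoting a monotype argument). -/
inductive STy (B F : Type) (ar : F → ℕ) : Type where
  | base : B → ITerm F ar → STy B F ar
  | arr : List ℕ → STy B F ar → STy B F ar → STy B F ar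

namespace STy

variable {B F : Type} {ar : F → ℕ}

/-- Application of an index substitution to a sized type (bound index
variables are not substituted). -/
def subst (σ : ℕ → ITerm F ar) : STy B F ar → STy B F ar
  | base b s => base b (s.subst σ)
  | arr vs τ ρ =>
      arr vs (τ.subst (fun i => if i ∈ vs then ITerm.var i else σ i)) (ρ.subst σ)

/-- Free index variables of a sized type. -/
def fv : STy B F ar → Set ℕ
  | base _ s => s.fv
  | arr vs τ ρ => (τ.fv \ {i | i ∈ vs}) ∪ ρ.fv

end STy

/-- Free index variables in positive and negative positions (positions are
negated to the left of an arrow, and bound variables are removed). -/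
def STy.pnv {B F : Type} {ar : F → ℕ} : STy B F ar → Set ℕ × Set ℕ
  | .base _ s => (s.fv, ∅)
  | .arr vs τ ρ =>
      ((τ.pnv.2 \ {i | i ∈ vs}) ∪ ρ.pnv.1,
       (τ.pnv.1 \ {i | i ∈ vs}) ∪ ρ.pnv.2)

/-- Free index variables in positive positions. -/
def STy.fpv {B F : Type} {ar : F → ℕ} (ρ : STy B F ar) : Set ℕ := ρ.pnv.1

/-- Free index variables in negative positions. -/
def STy.fnv {B F : Type} {ar : F → ℕ} (ρ : STy B F ar) : Set ℕ := ρ.pnv.2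

/-- Canonical monotypes: an indexed base type; or B[i] → ρ' with the index
variable i not among the negative free variables of ρ'; or π → ρ' for a
canonical polytype π = ∀vs.τ (i.e. τ canonical with FNV(τ) ⊆ vs) and ρ'
canonical with FV(π) ∩ FNV(ρ') = ∅. -/
inductive CanonM {B F : Type} {ar : F → ℕ} : STy B F ar → Prop where
  | base : ∀ (b : B) (s : ITerm F ar), CanonM (.base b s)
  | arrVar : ∀ (b : B) (i : ℕ) (ρ : STy B F ar), i ∉ ρ.fnv →
      CanonM (.arr [] (.base b (ITerm.var i)) ρ)
  | arrPoly : ∀ (vs : List ℕ) (τ ρ : STy B F ar),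
      CanonM τ → τ.fnv ⊆ {i | i ∈ vs} →
      CanonM ρ →
      (τ.fv \ {i | i ∈ vs}) ∩ ρ.fnv = ∅ →
      CanonM (.arr vs τ ρ)

theorem ITerm.fv_subst {F : Type} {ar : F → ℕ} (σ : ℕ → ITerm F ar)
    (t : ITerm F ar) : (t.subst σ).fv = ⋃ j ∈ t.fv, (σ j).fv := by
  induction t with
  | var i => simp [ITerm.subst, ITerm.fv]
  | app f ts ih =>
      simp only [ITerm.subst, ITerm.fv, ih]
      ext x; simp; tauto

theorem STy.fv_eq_union {B F : Type} {ar : F → ℕ} (ρ : STy B F ar) :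
    ρ.fv = ρ.fpv ∪ ρ.fnv := by
  induction ρ with
  | base b s => simp [STy.fv, STy.fpv, STy.fnv, STy.pnv]
  | arr vs τ ρ ihτ ihρ =>
      simp only [STy.fv, STy.fpv, STy.fnv, STy.pnv] at *
      rw [ihτ, ihρ]
      ext x; simp; tauto

theorem STy.pnv_subst_subset {B F : Type} {ar : F → ℕ} (ρ : STy B F ar) :
    ∀ σ : ℕ → ITerm F ar,
    (ρ.subst σ).fpv ⊆ (⋃ j ∈ ρ.fpv, (σ j).fv) ∧
    (ρ.subst σ).fnv ⊆ (⋃ j ∈ ρ.fnv, (σ j).fv) := by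
  induction ρ with
  | base b s =>
      intro σ
      simp [STy.subst, STy.fpv, STy.fnv, STy.pnv, ITerm.fv_subst]
  | arr vs τ ρ ihτ ihρ =>
      intro σ
      have hτp := (ihτ (fun i => if i ∈ vs then ITerm.var i else σ i)).1
      have hτn := (ihτ (fun i => if i ∈ vs then ITerm.var i else σ i)).2
      have hρp := (ihρ σ).1
      have hρn := (ihρ σ).2
      simp only [STy.subst, STy.fpv, STy.fnv, STy.pnv] at hτp hτn hρp hρn ⊢
      constructor
      · intro x hx
        rcases hx with ⟨hx, hxvs⟩ | hx
        · have h2 := hτn hx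
          simp only [Set.mem_iUnion] at h2
          obtain ⟨j, hj, hxj⟩ := h2
          by_cases hjvs : j ∈ vs
          · simp only [if_pos hjvs, ITerm.fv, Set.mem_singleton_iff] at hxj
            exact absurd (hxj ▸ hjvs) hxvs
          · simp only [if_neg hjvs] at hxj
            exact Set.mem_biUnion (Set.mem_union_left _ (Set.mem_diff_of_mem hj hjvs)) hxj
        · have h2 := hρp hx
          simp only [Set.mem_iUnion] at h2
          obtain ⟨j, hj, hxj⟩ := h2
          exact Set.mem_biUnion (Set.mem_union_right _ hj) hxj
      · intro x hx
        rcases hx with ⟨hx, hxvs⟩ | hx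
        · have h2 := hτp hx
          simp only [Set.mem_iUnion] at h2
          obtain ⟨j, hj, hxj⟩ := h2
          by_cases hjvs : j ∈ vs
          · simp only [if_pos hjvs, ITerm.fv, Set.mem_singleton_iff] at hxj
            exact absurd (hxj ▸ hjvs) hxvs
          · simp only [if_neg hjvs] at hxj
            exact Set.mem_biUnion (Set.mem_union_left _ (Set.mem_diff_of_mem hj hjvs)) hxj
        · have h2 := hρn hx
          simp only [Set.mem_iUnion] at h2
          obtain ⟨j, hj, hxj⟩ := h2
          exact Set.mem_biUnion (Set.mem_union_right _ hj) hxj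


/-- If σ fixes the negative free variables, fnv does not grow. -/
theorem STy.fnv_subst_subset_of_fix {B F : Type} {ar : F → ℕ}
    (ρ : STy B F ar) (σ : ℕ → ITerm F ar)
    (h : ∀ i ∈ ρ.fnv, σ i = ITerm.var i) :
    (ρ.subst σ).fnv ⊆ ρ.fnv := by
  intro x hx
  have := (STy.pnv_subst_subset ρ σ).2 hx
  simp only [Set.mem_iUnion] at this
  obtain ⟨j, hj, hxj⟩ := this
  rw [h j hj] at hxj
  simp [ITerm.fv] at hxj
  exact hxj ▸ hj

/-- canonicity is preserved under instantiation of positive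
positions: if ρ is canonical and the index substitution σ has domain disjoint
from the negative free variables of ρ (and maps no variable occurring
negatively in ρ to a non-variable term), then ρ·σ is canonical. -/
theorem canonical_subst {B F : Type} {ar : F → ℕ}
    (ρ : STy B F ar) (σ : ℕ → ITerm F ar)
    (hc : CanonM ρ)
    (hdom : ∀ i ∈ ρ.fnv, σ i = ITerm.var i)
    (hvar : ∀ i ∈ ρ.fnv, ∃ j, σ i = ITerm.var j) :
    CanonM (ρ.subst σ) := by
  clear hvar
  induction hc generalizing σ with
  | base b s => exact CanonM.base b _
  | arrVar b i ρ' hni =>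
      have hfnv : (STy.arr [] (STy.base b (ITerm.var i)) ρ').fnv
          = ({i} : Set ℕ) ∪ ρ'.fnv := by
        simp [STy.fnv, STy.pnv, ITerm.fv]
      have hii : σ i = ITerm.var i := by
        apply hdom; rw [hfnv]; simp
      have hρfix : ∀ j ∈ ρ'.fnv, σ j = ITerm.var j := by
        intro j hj; apply hdom; rw [hfnv]; exact Or.inr hj
      have hsub : (STy.arr [] (STy.base b (ITerm.var i)) ρ').subst σ
          = STy.arr [] (STy.base b (ITerm.var i)) (ρ'.subst σ) := by
        simp [STy.subst, ITerm.subst, hii]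
      rw [hsub]
      apply CanonM.arrVar
      intro hx
      exact hni (STy.fnv_subst_subset_of_fix ρ' σ hρfix hx)
  | arrPoly vs τ ρ' hτ hfnvτ hρ hdisj ihτ ihρ =>
      have hfnv : (STy.arr vs τ ρ').fnv
          = (τ.fpv \ {i | i ∈ vs}) ∪ ρ'.fnv := by
        simp [STy.fnv, STy.fpv, STy.pnv]
      set σ' : ℕ → ITerm F ar := fun i => if i ∈ vs then ITerm.var i else σ i
        with hσ'
      have hσ'fix : ∀ j ∈ τ.fnv, σ' j = ITerm.var j := by
        intro j hj
        have : j ∈ vs := hfnvτ hj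
        simp [hσ', this]
      have hρfix : ∀ j ∈ ρ'.fnv, σ j = ITerm.var j := by
        intro j hj; apply hdom; rw [hfnv]; exact Or.inr hj
      simp only [STy.subst]
      apply CanonM.arrPoly
      · exact ihτ σ' hσ'fix
      · intro x hx
        have := (STy.pnv_subst_subset τ σ').2 hx
        simp only [Set.mem_iUnion] at this
        obtain ⟨j, hj, hxj⟩ := this
        rw [hσ'fix j hj] at hxj
        simp [ITerm.fv] at hxj
        exact hxj ▸ hfnvτ hj
      · exact ihρ σ hρfix
      · ext x
        simp only [Set.mem_inter_iff, Set.mem_diff, Set.mem_empty_iff_false,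
          iff_false, not_and]
        rintro ⟨hxτ, hxvs⟩ hxρ
        have hxρ' : x ∈ ρ'.fnv := STy.fnv_subst_subset_of_fix ρ' σ hρfix hxρ
        have hxτ' : x ∈ ⋃ j ∈ τ.fv, (σ' j).fv := by
          rw [STy.fv_eq_union] at *
          rcases hxτ with h | h
          · have := (STy.pnv_subst_subset τ σ').1 h
            simp only [Set.mem_iUnion] at this ⊢
            obtain ⟨j, hj, hxj⟩ := this
            exact ⟨j, Or.inl hj, hxj⟩
          · have := (STy.pnv_subst_subset τ σ').2 h
            simp only [Set.mem_iUnion] at this ⊢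
            obtain ⟨j, hj, hxj⟩ := this
            exact ⟨j, Or.inr hj, hxj⟩
        simp only [Set.mem_iUnion] at hxτ'
        obtain ⟨j, hj, hxj⟩ := hxτ'
        by_cases hjvs : j ∈ vs
        · simp [hσ', hjvs, ITerm.fv] at hxj
          exact hxvs (hxj ▸ hjvs)
        · simp only [hσ', if_neg hjvs] at hxj
          rw [STy.fv_eq_union] at hj
          have hjfix : σ j = ITerm.var j := by
            rcases hj with h | h
            · apply hdom; rw [hfnv]; exact Or.inl ⟨h, hjvs⟩
            · exact absurd (hfnvτ h) hjvs
          rw [hjfix] at hxj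
          simp [ITerm.fv] at hxj
          subst hxj
          have : x ∈ (τ.fv \ {i | i ∈ vs}) ∩ ρ'.fnv := by
            refine ⟨⟨?_, hjvs⟩, hxρ'⟩
            rw [STy.fv_eq_union]; exact hj
          rw [hdisj] at this
          exact this
end
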